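/- Let u₀ ∈ L^∞(ℝ) be measurable, α > 0, h_α(x) = (1+x²)^{−α}, and let G be the heat kernel. Let T* = min{1, ((‖u₀‖_∞+1)²(‖h_α'‖_∞/2 + 1/√π))^{−2}, (4(‖u₀‖_∞+1)(‖h_α'‖_∞/2 + 1/√π))^{−2}}. Then for any bounded continuous v on ℝ × (0,T*] with ‖v‖_∞ ≤ ‖u₀‖_∞ + 1, and any (x,t) with 0 < t ≤ T*, the quantity |∫₀^t ∫_ℝ (v(s,τ)²/2)(G(x,t;s,τ)h_α'(s) + ∂G/∂s(x,t;s,τ)h_α(s)) ds dτ| is at most 1. -/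

import Mathlib

open MeasureTheory Real

noncomputable def G (x t s τ : ℝ) : ℝ :=
  (1 / Real.sqrt (4 * Real.pi * (t - τ))) * Real.exp (-(x - s)^2 / (4 * (t - τ)))

noncomputable def hfun (α : ℝ) (x : ℝ) : ℝ := (1 + x^2) ^ (-α)

open Set ProbabilityTheory

/-! The heat kernel `G x t · τ` is the Gaussian density of variance `2 (t - τ)`, so it has total
mass 1, and its first absolute moment gives `∫ |∂ₛG| ds = (π (t - τ))^(-1/2)`. With
`|v²/2| ≤ (N+1)²/2`, `|h_α| ≤ 1` and `|h_α'| ≤ H`, the inner integral is therefore at most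
`(N+1)²/2 · (H + (π (t - τ))^(-1/2))`, which is integrable in `τ` with integral
`(N+1)²/2 · (H t + 2 √(t/π)) ≤ √t · (N+1)² (H/2 + 1/√π)`; the first two terms of `T*` make this ≤ 1. -/

lemma integral_abs_mul_exp_neg_mul_sq {b : ℝ} (hb : 0 < b) :
    ∫ y, |y| * exp (-b * y ^ 2) = b⁻¹ := by
  have half : ∫ y in Ioi (0 : ℝ), y * exp (-b * y ^ 2) = (2 * b)⁻¹ := by
    have := integral_rpow_mul_exp_neg_mul_rpow two_pos (by norm_num : (-1 : ℝ) < 1) hb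
    norm_num at this
    simpa [rpow_neg_one, mul_comm] using this
  calc ∫ y, |y| * exp (-b * y ^ 2) = ∫ y, (fun r => r * exp (-b * r ^ 2)) |y| := by
        simp only [sq_abs]
    _ = b⁻¹ := by rw [integral_comp_abs (f := fun r => r * exp (-b * r ^ 2)), half]; field_simp

lemma abs_hfun_le_one {α : ℝ} (hα : 0 ≤ α) (s : ℝ) : |hfun α s| ≤ 1 := by
  rw [hfun, abs_of_nonneg (by positivity)]
  exact rpow_le_one_of_one_le_of_nonpos (by nlinarith [sq_nonneg s]) (by linarith)

section HeatKernel

variable {x t τ : ℝ}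

lemma G_eq_gaussianPDFReal (h : τ < t) (s : ℝ) :
    G x t s τ = gaussianPDFReal x (2 * (t - τ)).toNNReal s := by
  rw [G, gaussianPDFReal, Real.coe_toNNReal _ (by linarith), one_div]
  congr 3 <;> ring

lemma G_eq_mul_exp (s : ℝ) :
    G x t s τ = (√(4 * π * (t - τ)))⁻¹ * exp (-(4 * (t - τ))⁻¹ * (x - s) ^ 2) := by
  rw [G, one_div]
  congr 2
  ring

lemma hasDerivAt_G (h : τ < t) (s : ℝ) :
    HasDerivAt (fun s' => G x t s' τ) ((x - s) / (2 * (t - τ)) * G x t s τ) s := by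
  have hsq : HasDerivAt (fun s' => (x - s') ^ 2) (2 * (x - s) * -1) s :=
    ((hasDerivAt_pow 2 (x - s)).comp s ((hasDerivAt_id s).const_sub x)).congr_deriv (by simp)
  have hq : HasDerivAt (fun s' => -(4 * (t - τ))⁻¹ * (x - s') ^ 2) ((x - s) / (2 * (t - τ))) s := by
    have : t - τ ≠ 0 := by linarith
    exact (hsq.const_mul _).congr_deriv (by field_simp; ring)
  rw [funext fun s' => G_eq_mul_exp (x := x) (t := t) (τ := τ) s', G_eq_mul_exp]
  exact (hq.exp.const_mul (√(4 * π * (t - τ)))⁻¹).congr_deriv (by ring)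

lemma G_nonneg {s : ℝ} : 0 ≤ G x t s τ := by
  rw [G]; positivity

lemma abs_deriv_G (h : τ < t) (s : ℝ) :
    |deriv (fun s' => G x t s' τ) s| = (2 * (t - τ))⁻¹ * (√(4 * π * (t - τ)))⁻¹ *
      (|x - s| * exp (-(4 * (t - τ))⁻¹ * (x - s) ^ 2)) := by
  have : 0 < t - τ := by linarith
  rw [(hasDerivAt_G h s).deriv, abs_mul, abs_div, abs_of_pos (by positivity : 0 < 2 * (t - τ)),
    abs_of_nonneg G_nonneg, G_eq_mul_exp]
  ring

lemma integrable_abs_deriv_G (h : τ < t) :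
    Integrable fun s => |deriv (fun s' => G x t s' τ) s| := by
  have ha : 0 < t - τ := by linarith
  have hb : 0 < (4 * (t - τ))⁻¹ := by positivity
  simp_rw [abs_deriv_G h]
  refine Integrable.const_mul ?_ _
  simpa [abs_mul] using ((integrable_mul_exp_neg_mul_sq hb).abs.comp_sub_left x)

lemma integral_abs_deriv_G (h : τ < t) :
    ∫ s, |deriv (fun s' => G x t s' τ) s| = (√π)⁻¹ * (t - τ) ^ (-(1 / 2 : ℝ)) := by
  have ha : 0 < t - τ := by linarith
  simp_rw [abs_deriv_G h]
  rw [integral_const_mul, integral_sub_left_eq_self (fun y => |y| * exp (-(4 * (t - τ))⁻¹ * y ^ 2)),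
    integral_abs_mul_exp_neg_mul_sq (by positivity), rpow_neg ha.le, ← sqrt_eq_rpow,
    show 4 * π * (t - τ) = 2 ^ 2 * π * (t - τ) by norm_num, sqrt_mul (by positivity),
    sqrt_mul (by positivity), sqrt_sq zero_le_two]
  field_simp
  ring

lemma integrable_G (h : τ < t) : Integrable fun s => G x t s τ := by
  simp_rw [G_eq_gaussianPDFReal h]
  exact integrable_gaussianPDFReal _ _

lemma integral_G (h : τ < t) : ∫ s, G x t s τ = 1 := by
  simp_rw [G_eq_gaussianPDFReal h]
  exact integral_gaussianPDFReal_eq_one _ (by simp; linarith)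

lemma abs_integral_mul_deriv_G_mul_le {w g g' : ℝ → ℝ} {M H : ℝ} (hw : ∀ s, |w s| ≤ M)
    (hg : ∀ s, |g s| ≤ 1) (hg' : ∀ s, |g' s| ≤ H) (h : τ < t) :
    |∫ s, w s * (G x t s τ * g' s + deriv (fun s' => G x t s' τ) s * g s)|
      ≤ M * (H + (√π)⁻¹ * (t - τ) ^ (-(1 / 2 : ℝ))) := by
  have hM : 0 ≤ M := (abs_nonneg _).trans (hw 0)
  have hbound : ∀ s, ‖w s * (G x t s τ * g' s + deriv (fun s' => G x t s' τ) s * g s)‖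
      ≤ M * (H * G x t s τ + |deriv (fun s' => G x t s' τ) s|) := fun s => by
    rw [norm_mul, norm_eq_abs]
    refine mul_le_mul (hw s) ((abs_add_le _ _).trans (add_le_add ?_ ?_)) (abs_nonneg _) hM
    · rw [abs_mul, abs_of_nonneg G_nonneg, mul_comm]
      exact mul_le_mul_of_nonneg_right (hg' s) G_nonneg
    · rw [abs_mul]
      exact mul_le_of_le_one_right (abs_nonneg _) (hg s)
  have hG := (integrable_G (x := x) h).const_mul H
  have hdG := integrable_abs_deriv_G (x := x) h
  calc _ ≤ ∫ s, M * (H * G x t s τ + |deriv (fun s' => G x t s' τ) s|) :=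
        norm_integral_le_of_norm_le ((hG.add hdG).const_mul M) (.of_forall hbound)
    _ = M * (H + (√π)⁻¹ * (t - τ) ^ (-(1 / 2 : ℝ))) := by
      rw [integral_const_mul, integral_add hG hdG,
        integral_const_mul, integral_G h, integral_abs_deriv_G h, mul_one]

end HeatKernel

lemma integrableOn_Ioo_sub_rpow {r t : ℝ} (hr : -1 < r) :
    IntegrableOn (fun τ => (t - τ) ^ r) (Ioo 0 t) := by
  rcases le_total t 0 with ht | ht
  · simp [Ioo_eq_empty_of_le ht]
  have := ((intervalIntegral.intervalIntegrable_rpow' (a := 0) (b := t) hr).comp_sub_left t).symm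
  simp only [sub_self, sub_zero] at this
  exact ((intervalIntegrable_iff_integrableOn_Ioc_of_le ht).mp this).mono_set Ioo_subset_Ioc_self

lemma integral_Ioo_sub_rpow {r t : ℝ} (hr : -1 < r) (ht : 0 ≤ t) :
    ∫ τ in Ioo 0 t, (t - τ) ^ r = t ^ (r + 1) / (r + 1) := by
  rw [← integral_Ioc_eq_integral_Ioo, ← intervalIntegral.integral_of_le ht,
    intervalIntegral.integral_comp_sub_left (fun u => u ^ r), sub_self, sub_zero,
    integral_rpow (Or.inl hr), zero_rpow (by linarith), sub_zero]

lemma integrableOn_Ioo_add_mul_sub_rpow_neg_half (A B t : ℝ) :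
    IntegrableOn (fun τ => A + B * (t - τ) ^ (-(1 / 2 : ℝ))) (Ioo 0 t) :=
  (integrableOn_const measure_Ioo_lt_top.ne).add
    ((integrableOn_Ioo_sub_rpow (by norm_num)).const_mul B)

lemma integral_Ioo_add_mul_sub_rpow_neg_half (A B : ℝ) {t : ℝ} (ht : 0 ≤ t) :
    ∫ τ in Ioo 0 t, (A + B * (t - τ) ^ (-(1 / 2 : ℝ))) = A * t + B * (2 * √t) := by
  rw [integral_add (integrableOn_const (C := A) measure_Ioo_lt_top.ne)
      ((integrableOn_Ioo_sub_rpow (by norm_num)).const_mul B), integral_const_mul,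
    integral_Ioo_sub_rpow (by norm_num) ht, setIntegral_const, measureReal_def, volume_Ioo,
    sub_zero, ENNReal.toReal_ofReal ht, smul_eq_mul, sqrt_eq_rpow]
  norm_num
  ring

lemma duhamel_time_bound_le_one {N H t : ℝ} (hH : 0 ≤ H) (ht : 0 ≤ t) (ht1 : t ≤ 1)
    (htD : t ≤ (((N + 1) ^ 2 * (H / 2 + 1 / √π)) ^ 2)⁻¹) :
    (N + 1) ^ 2 / 2 * (H * t + (√π)⁻¹ * (2 * √t)) ≤ 1 := by
  set D := (N + 1) ^ 2 * (H / 2 + 1 / √π)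
  have hD : 0 ≤ D := by positivity
  have hsqrt : t ≤ √t := by nlinarith [sq_sqrt ht, sqrt_nonneg t, sqrt_le_one.mpr ht1]
  have hsqrtD : √t * D ≤ 1 := by
    rcases hD.eq_or_lt with hD0 | hD0
    · simp [← hD0]
    calc √t * D ≤ √((D ^ 2)⁻¹) * D := by gcongr
      _ = 1 := by rw [sqrt_inv, sqrt_sq hD, inv_mul_cancel₀ hD0.ne']
  calc _ = (N + 1) ^ 2 / 2 * H * t + (N + 1) ^ 2 * (1 / √π) * √t := by ring
    _ ≤ (N + 1) ^ 2 / 2 * H * √t + (N + 1) ^ 2 * (1 / √π) * √t := by gcongr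
    _ = √t * D := by ring
    _ ≤ 1 := hsqrtD

theorem duhamel_nonlinear_term_bound_general
    (α : ℝ) (hα : 0 < α)
    (N : ℝ)
    (H : ℝ) (hH : IsLUB (Set.range fun x => |deriv (hfun α) x|) H)
    (Tstar : ℝ)
    (hT : Tstar = min 1 (min
      ((((N + 1)^2 * (H / 2 + 1 / Real.sqrt Real.pi))^2)⁻¹)
      (((4 * (N + 1) * (H / 2 + 1 / Real.sqrt Real.pi))^2)⁻¹)))
    (v : ℝ → ℝ → ℝ)
    (hvbdd : ∀ s τ : ℝ, |v s τ| ≤ N + 1)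
    (x t : ℝ) (ht : 0 < t) (htT : t ≤ Tstar) :
    |∫ τ in Set.Ioo 0 t, ∫ s : ℝ,
        (v s τ)^2 / 2 * (G x t s τ * deriv (hfun α) s +
          deriv (fun s' => G x t s' τ) s * hfun α s)| ≤ 1 := by
  have hH0 : 0 ≤ H := (abs_nonneg _).trans (hH.1 ⟨0, rfl⟩)
  have hv : ∀ s τ, |v s τ ^ 2 / 2| ≤ (N + 1) ^ 2 / 2 := fun s τ => by
    rw [abs_div, abs_pow, abs_two]
    gcongr
    exact hvbdd s τ
  have hinner : ∀ τ ∈ Ioo 0 t, ‖∫ s, v s τ ^ 2 / 2 * (G x t s τ * deriv (hfun α) s +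
      deriv (fun s' => G x t s' τ) s * hfun α s)‖
      ≤ (N + 1) ^ 2 / 2 * (H + (√π)⁻¹ * (t - τ) ^ (-(1 / 2 : ℝ))) := fun τ hτ =>
    abs_integral_mul_deriv_G_mul_le (hv · τ) (abs_hfun_le_one hα.le) (fun s => hH.1 ⟨s, rfl⟩) hτ.2
  -- `norm_integral_le_of_norm_le` does not need the integrand to be integrable (else its integral is 0).
  calc _ ≤ ∫ τ in Ioo 0 t, (N + 1) ^ 2 / 2 * (H + (√π)⁻¹ * (t - τ) ^ (-(1 / 2 : ℝ))) :=
        norm_integral_le_of_norm_le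
          ((integrableOn_Ioo_add_mul_sub_rpow_neg_half _ _ _).const_mul _)
          ((ae_restrict_iff' measurableSet_Ioo).mpr (.of_forall hinner))
    _ = (N + 1) ^ 2 / 2 * (H * t + (√π)⁻¹ * (2 * √t)) := by
        rw [integral_const_mul, integral_Ioo_add_mul_sub_rpow_neg_half _ _ ht.le]
    _ ≤ 1 := duhamel_time_bound_le_one hH0 ht.le (htT.trans (hT ▸ min_le_left _ _))
        (htT.trans (hT ▸ (min_le_right _ _).trans (min_le_left _ _)))

theorem duhamel_nonlinear_term_bound
    (α : ℝ) (hα : 0 < α)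
    (u₀ : ℝ → ℝ) (hmeas : Measurable u₀)
    (N : ℝ) (hN : IsLUB (Set.range fun x => |u₀ x|) N)
    (H : ℝ) (hH : IsLUB (Set.range fun x => |deriv (hfun α) x|) H)
    (Tstar : ℝ)
    (hT : Tstar = min 1 (min
      ((((N + 1)^2 * (H / 2 + 1 / Real.sqrt Real.pi))^2)⁻¹)
      (((4 * (N + 1) * (H / 2 + 1 / Real.sqrt Real.pi))^2)⁻¹)))
    (v : ℝ → ℝ → ℝ)
    (hvcont : ContinuousOn (fun p : ℝ × ℝ => v p.1 p.2) {p : ℝ × ℝ | 0 < p.2 ∧ p.2 ≤ Tstar})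
    (hvbdd : ∀ s τ : ℝ, |v s τ| ≤ N + 1)
    (x t : ℝ) (ht : 0 < t) (htT : t ≤ Tstar) :
    |∫ τ in Set.Ioo 0 t, ∫ s : ℝ,
        (v s τ)^2 / 2 * (G x t s τ * deriv (hfun α) s +
          deriv (fun s' => G x t s' τ) s * hfun α s)| ≤ 1 :=
  duhamel_nonlinear_term_bound_general α hα N H hH Tstar hT v hvbdd x t ht htT
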